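/- arXiv:1411.6554 — 3 statements merged into one kernel-verified Lean document; each statement's English description precedes it below -/
import Mathlib

section
/- Let k be a positive integer, let H be a graph with vertex cover number τ(H) ≥ 4k−3, and let {x_1,y_1},…,{x_k,y_k} be k pairs of distinct vertices of H. Then there is a matching M = {m_1,…,m_k} of size k in H such that for all i ≠ j the edge m_i contains no vertex of {x_j,y_j}. -/
/-!
Choose the edges greedily. When the edge for index `i` is chosen, it must avoid the at most
`2 (k - 1)` vertices already used by the other edges and the at most `2 (k - 1)` vertices `x j`,
`y j` with `j ≠ i`. These at most `4k - 4 < τ(H)` vertices do not cover `H`, so some edge of `H`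
misses all of them.
-/

universe u

variable {V : Type u}

/-- A graph is `k`-connected if it has more than `k` vertices and deleting any
set of fewer than `k` vertices leaves a connected graph. -/
def KConnected (G : SimpleGraph V) (k : ℕ) : Prop :=
  k < Nat.card V ∧ ∀ X : Set V, X.ncard < k → (G.induce Xᶜ).Connected

/-- A graph is bipartite if it is 2-colorable. -/
def Bipartite (G : SimpleGraph V) : Prop := G.Colorable 2

/-- `X` is an odd cycle cover of `G` if `G - X` is bipartite. -/
def IsOddCycleCover (G : SimpleGraph V) (X : Set V) : Prop :=
  Bipartite (G.induce Xᶜ)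

/-- `X` is a minimum odd cycle cover of `G`. -/
def IsMinOddCycleCover (G : SimpleGraph V) (X : Set V) : Prop :=
  IsOddCycleCover G X ∧ ∀ Y : Set V, IsOddCycleCover G Y → X.ncard ≤ Y.ncard

/-- The odd cycle cover `X` induces the partition `(A, B)`:
`(A \ X, B \ X)` is a bipartition of `G - X`, and a vertex of `X` lies in `A`
(resp. `B`) if it has more neighbours in `B \ X` than in `A \ X`
(resp. more neighbours in `A \ X` than in `B \ X`). -/
def InducesPartition (G : SimpleGraph V) (X A B : Set V) : Prop :=
  (∀ u v, G.Adj u v → u ∉ X → v ∉ X → ¬(u ∈ A ∧ v ∈ A) ∧ ¬(u ∈ B ∧ v ∈ B)) ∧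
  (∀ x ∈ X,
    ({y | G.Adj x y ∧ y ∈ A \ X}.ncard < {y | G.Adj x y ∧ y ∈ B \ X}.ncard → x ∈ A) ∧
    ({y | G.Adj x y ∧ y ∈ B \ X}.ncard < {y | G.Adj x y ∧ y ∈ A \ X}.ncard → x ∈ B))

/-- `(A, B)` is a nice partition of `G`. -/
def IsNicePartition (G : SimpleGraph V) (A B : Set V) : Prop :=
  A ∪ B = Set.univ ∧ Disjoint A B ∧
    ∃ X : Set V, IsMinOddCycleCover G X ∧ InducesPartition G X A B

/-- The graph `G_{A,B} = G[A] ∪ G[B]`: edges of `G` with both ends in `A` or both in `B`. -/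
def sideGraph (G : SimpleGraph V) (A B : Set V) : SimpleGraph V where
  Adj u v := G.Adj u v ∧ ((u ∈ A ∧ v ∈ A) ∨ (u ∈ B ∧ v ∈ B))
  symm := by
    constructor
    intro u v h
    exact ⟨h.1.symm, by tauto⟩
  loopless := by
    constructor
    intro v h
    exact G.irrefl h.1

/-- A parity breaking matching for `(S, I)` with respect to `(A, B)`, where
`S = {{s i, t i} : i}`: a matching `{m i : i ∈ I}` of edges of `G_{A,B}` such that
`m i` contains no vertex of `{s j, t j}` for `j ≠ i`. -/
def ParityBreakingMatching (G : SimpleGraph V) (A B : Set V) {k : ℕ}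
    (s t : Fin k → V) (I : Finset (Fin k)) (m : Fin k → Sym2 V) : Prop :=
  (∀ i ∈ I, m i ∈ (sideGraph G A B).edgeSet) ∧
  (∀ i ∈ I, ∀ j ∈ I, i ≠ j → ∀ x ∈ m i, x ∉ m j) ∧
  (∀ i ∈ I, ∀ j : Fin k, j ≠ i → s j ∉ m i ∧ t j ∉ m i)

/-- `P` is a family of pairwise vertex-disjoint paths, `P i` connecting `s i` and `t i`. -/
def DisjointPaths {k : ℕ} (G : SimpleGraph V) (s t : Fin k → V)
    (P : ∀ i, G.Walk (s i) (t i)) : Prop :=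
  (∀ i, (P i).IsPath) ∧ ∀ i j, i ≠ j → ∀ x ∈ (P i).support, x ∉ (P j).support

/-- `G` is `k`-linked. -/
def KLinked (G : SimpleGraph V) (k : ℕ) : Prop :=
  ∀ s t : Fin k → V, Function.Injective (Sum.elim s t) →
    ∃ P : ∀ i, G.Walk (s i) (t i), DisjointPaths G s t P

/-- `G` is parity-`k`-linked. -/
def ParityKLinked (G : SimpleGraph V) (k : ℕ) : Prop :=
  ∀ s t : Fin k → V, Function.Injective (Sum.elim s t) →
    ∀ p : Fin k → Bool,
      ∃ P : ∀ i, G.Walk (s i) (t i), DisjointPaths G s t P ∧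
        ∀ i, (Odd (P i).length ↔ p i = true)

/-- A set of vertices is independent if no edge joins two of its vertices. -/
def IsIndepSet' (G : SimpleGraph V) (s : Set V) : Prop :=
  ∀ x ∈ s, ∀ y ∈ s, ¬ G.Adj x y

/-- `G` is parity-`k`-linked restricted to independent sets. -/
def ParityKLinkedIndep (G : SimpleGraph V) (k : ℕ) : Prop :=
  ∀ s t : Fin k → V, Function.Injective (Sum.elim s t) →
    IsIndepSet' G (Set.range s ∪ Set.range t) →
    ∀ p : Fin k → Bool,
      ∃ P : ∀ i, G.Walk (s i) (t i), DisjointPaths G s t P ∧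
        ∀ i, (Odd (P i).length ↔ p i = true)

/-- `G` contains `k` pairwise vertex-disjoint odd `S`-cycles. -/
def HasDisjointOddSCycles (G : SimpleGraph V) (S : Set V) (k : ℕ) : Prop :=
  ∃ (v : Fin k → V) (c : ∀ i, G.Walk (v i) (v i)),
    (∀ i, (c i).IsCycle ∧ Odd (c i).length ∧ ∃ x ∈ S, x ∈ (c i).support) ∧
    ∀ i j, i ≠ j → ∀ x ∈ (c i).support, x ∉ (c j).support

/-- `G` contains an odd `S`-cycle. -/
def HasOddSCycle (G : SimpleGraph V) (S : Set V) : Prop :=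
  ∃ (v : V) (c : G.Walk v v), c.IsCycle ∧ Odd c.length ∧ ∃ x ∈ S, x ∈ c.support

/-- `G` contains `k` pairwise vertex-disjoint odd cycles. -/
def HasDisjointOddCycles (G : SimpleGraph V) (k : ℕ) : Prop :=
  ∃ (v : Fin k → V) (c : ∀ i, G.Walk (v i) (v i)),
    (∀ i, (c i).IsCycle ∧ Odd (c i).length) ∧
    ∀ i j, i ≠ j → ∀ x ∈ (c i).support, x ∉ (c j).support

/-- `C` is a vertex cover of `G`. -/
def IsVertexCover (G : SimpleGraph V) (C : Set V) : Prop :=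
  ∀ e ∈ G.edgeSet, ∃ v ∈ C, v ∈ e

/-- The vertex cover number `τ(G)`. -/
noncomputable def vcNumber (G : SimpleGraph V) : ℕ :=
  sInf {n | ∃ C : Set V, IsVertexCover G C ∧ C.ncard = n}

/-- `P` is an odd `Z`-path: a path of odd length whose vertex set meets `Z`
exactly in its two end vertices. -/
def IsOddZPath (G : SimpleGraph V) (Z : Set V) {u v : V} (P : G.Walk u v) : Prop :=
  P.IsPath ∧ Odd P.length ∧ u ∈ Z ∧ v ∈ Z ∧
    ∀ x ∈ P.support, x ∈ Z → x = u ∨ x = v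

open Finset

lemma Sym2.card_toFinset_le_two {α : Type*} [DecidableEq α] (z : Sym2 α) :
    #z.toFinset ≤ 2 := by
  rw [Sym2.card_toFinset]
  split_ifs <;> omega

lemma exists_edge_disjoint_of_card_lt_vcNumber (H : SimpleGraph V) (F : Finset V)
    (hF : #F < vcNumber H) : ∃ e ∈ H.edgeSet, ∀ v ∈ e, v ∉ F := by
  by_contra! hcover
  have hF_cover : IsVertexCover H (F : Set V) := fun e he => by
    obtain ⟨v, hve, hvF⟩ := hcover e he
    exact ⟨v, hvF, hve⟩
  exact hF.not_ge (Nat.sInf_le ⟨F, hF_cover, Set.ncard_coe_finset F⟩)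

lemma exists_matching_avoiding [DecidableEq V] {ι : Type*} [Fintype ι]
    [DecidableEq ι] (H : SimpleGraph V) (B : ι → Finset V)
    (hB : ∀ i, #(B i) + 2 * (Fintype.card ι - 1) < vcNumber H) :
    ∃ m : ι → Sym2 V, (∀ i, m i ∈ H.edgeSet ∧ ∀ v ∈ m i, v ∉ B i) ∧
      ∀ i j, i ≠ j → ∀ v ∈ m i, v ∉ m j := by
  rcases isEmpty_or_nonempty ι with hι | ⟨⟨i₀⟩⟩
  · exact ⟨isEmptyElim, isEmptyElim, isEmptyElim⟩
  obtain ⟨e₀, -, -⟩ := exists_edge_disjoint_of_card_lt_vcNumber H ∅ <| by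
    rw [card_empty]
    exact (Nat.zero_le _).trans_lt (hB i₀)
  suffices h : ∀ I : Finset ι, ∃ m : ι → Sym2 V,
      (∀ i ∈ I, m i ∈ H.edgeSet ∧ ∀ v ∈ m i, v ∉ B i) ∧
      ∀ i ∈ I, ∀ j ∈ I, i ≠ j → ∀ v ∈ m i, v ∉ m j by
    simpa using h univ
  intro I
  induction I using Finset.induction_on with
  | empty => exact ⟨fun _ => e₀, by simp, by simp⟩
  | insert i I hi ih =>
    obtain ⟨m, hm_edge, hm_disj⟩ := ih
    set F := B i ∪ I.biUnion fun j => (m j).toFinset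
    have hF : #F < vcNumber H := calc
      #F ≤ #(B i) + #I * 2 := (card_union_le _ _).trans <| Nat.add_le_add_left
        (card_biUnion_le_card_mul _ _ _ fun j _ => Sym2.card_toFinset_le_two _) _
      _ ≤ #(B i) + 2 * (Fintype.card ι - 1) := by
        have := card_lt_univ_of_notMem hi
        omega
      _ < vcNumber H := hB i
    obtain ⟨e, he, heF⟩ := exists_edge_disjoint_of_card_lt_vcNumber H F hF
    have he_new : ∀ j ∈ I, ∀ v ∈ e, v ∉ m j := fun j hj v hv hvj =>
      heF v hv (mem_union_right _ (mem_biUnion.2 ⟨j, hj, Sym2.mem_toFinset.2 hvj⟩))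
    have hne : ∀ j ∈ I, j ≠ i := fun j hj hji => hi (hji ▸ hj)
    refine ⟨Function.update m i e, ?_, ?_⟩
    · intro j hj
      rcases mem_insert.1 hj with rfl | hjI
      · simpa using ⟨he, fun v hv hvB => heF v hv (mem_union_left _ hvB)⟩
      · simpa [hne j hjI] using hm_edge j hjI
    · intro j hj j' hj' hjj'
      rcases mem_insert.1 hj with rfl | hjI <;> rcases mem_insert.1 hj' with rfl | hj'I
      · exact absurd rfl hjj'
      · simpa [hne j' hj'I] using he_new j' hj'I
      · simpa [hne j hjI] using fun v hv hve => he_new j hjI v hve hv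
      · simpa [hne j hjI, hne j' hj'I] using hm_disj j hjI j' hj'I hjj'

theorem stmt10_general {V : Type u} (k : ℕ) (H : SimpleGraph V)
    (htau : 4 * k - 3 ≤ vcNumber H)
    (x y : Fin k → V) :
    ∃ m : Fin k → Sym2 V,
      (∀ i, m i ∈ H.edgeSet) ∧
      (∀ i j, i ≠ j → ∀ v ∈ m i, v ∉ m j) ∧
      (∀ i j, i ≠ j → x j ∉ m i ∧ y j ∉ m i) := by
  classical
  let B : Fin k → Finset V := fun i => (univ.erase i).biUnion fun j => {x j, y j}
  have hB : ∀ i, #(B i) + 2 * (Fintype.card (Fin k) - 1) < vcNumber H := fun i => by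
    have hB_card : #(B i) ≤ #(univ.erase i) * 2 :=
      card_biUnion_le_card_mul _ _ _ fun j _ => card_le_two
    rw [card_erase_of_mem (mem_univ i), card_univ, Fintype.card_fin] at hB_card
    rw [Fintype.card_fin]
    have hk := i.pos
    omega
  obtain ⟨m, hm_edge, hm_disj⟩ := exists_matching_avoiding H B hB
  refine ⟨m, fun i => (hm_edge i).1, hm_disj, fun i j hij => ?_⟩
  have hj : j ∈ univ.erase i := mem_erase.2 ⟨hij.symm, mem_univ j⟩
  exact ⟨fun hx => (hm_edge i).2 _ hx (mem_biUnion.2 ⟨j, hj, by simp⟩),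
    fun hy => (hm_edge i).2 _ hy (mem_biUnion.2 ⟨j, hj, by simp⟩)⟩

theorem stmt10 {V : Type u} [Fintype V] (k : ℕ) (hk : 0 < k) (H : SimpleGraph V)
    (htau : 4 * k - 3 ≤ vcNumber H)
    (x y : Fin k → V) (hxy : ∀ i, x i ≠ y i) :
    ∃ m : Fin k → Sym2 V,
      (∀ i, m i ∈ H.edgeSet) ∧
      (∀ i j, i ≠ j → ∀ v ∈ m i, v ∉ m j) ∧
      (∀ i j, i ≠ j → x j ∉ m i ∧ y j ∉ m i) :=
  stmt10_general k H htau x y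
end

section
/- Let k be a positive integer and let H be a graph with vertex cover number τ(H) ≥ 2k−1. Let {x_1,y_1},…,{x_k,y_k} be k pairs of vertices of H such that Z = {x_1,…,x_k,y_1,…,y_k} is an independent set of size 2k. Then there is a matching M = {m_1,…,m_k} of size k in H such that for all i ≠ j the edge m_i contains no vertex of {x_j,y_j}. -/
universe u

variable {V : Type u}

/-!
Let `Z` be the set of terminals and `M` a maximal matching of `H - Z`. Offer pair `i` the
neighbours of `x i` or `y i` outside `Z ∪ V(M)`, and every edge of `M`. If Hall's condition failed
for a set `S` of pairs, then these neighbours of `S`, together with `V(M)` and the terminals of the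
pairs outside `S`, would form a vertex cover (by maximality of `M` and independence of `Z`) with at
most `2k - 2` vertices. So Hall's theorem assigns distinct offers to the pairs: pair `i` takes
the edge from `x i` or `y i` to its neighbour, or its edge of `M`. Distinct offers use disjoint
vertex sets outside `Z`, which makes the resulting edges a matching of the required kind.
-/

open Finset Function

theorem vcNumber_le_ncard {H : SimpleGraph V} {C : Set V} (hC : IsVertexCover H C) :
    vcNumber H ≤ C.ncard :=
  Nat.sInf_le ⟨C, hC, rfl⟩

def terminals {ι : Type*} (x y : ι → V) : Set V := Set.range x ∪ Set.range y

def IsMatchingAvoiding (H : SimpleGraph V) (Z : Set V) (M : Finset (Sym2 V)) : Prop :=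
  (∀ e ∈ M, e ∈ H.edgeSet ∧ ∀ v ∈ e, v ∉ Z) ∧
    (M : Set (Sym2 V)).Pairwise fun e e' => ∀ v ∈ e, v ∉ e'

theorem Finset.exists_injective_mem_disjSum_of_forall_card_le {ι α β : Type*} [Fintype ι]
    [DecidableEq α] [DecidableEq β] (t : ι → Finset α) (B : Finset β)
    (h : ∀ S : Finset ι, #S ≤ #(S.biUnion t) + #B) :
    ∃ f : ι → α ⊕ β, Injective f ∧ ∀ i, f i ∈ (t i).disjSum B := by
  refine (all_card_le_biUnion_card_iff_exists_injective _).mp fun S => ?_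
  obtain rfl | ⟨i, hi⟩ := S.eq_empty_or_nonempty
  · simp
  calc #S ≤ #((S.biUnion t).disjSum B) := by rw [card_disjSum]; exact h S
    _ ≤ _ := card_le_card fun z hz => by
      rcases mem_disjSum.mp hz with ⟨a, ha, rfl⟩ | ⟨b, hb, rfl⟩
      · obtain ⟨j, hj, ha⟩ := mem_biUnion.mp ha
        exact mem_biUnion.mpr ⟨j, hj, inl_mem_disjSum.mpr ha⟩
      · exact mem_biUnion.mpr ⟨i, hi, inr_mem_disjSum.mpr hb⟩

theorem eq_of_mem_private_parts {ι : Type*} {x y : ι → V} (hxy : Injective (Sum.elim x y))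
    {P : ι → Set V} (hPZ : ∀ i, Disjoint (P i) (terminals x y)) (hP : Pairwise (Disjoint on P))
    ⦃i j : ι⦄ ⦃v : V⦄ (hi : v = x i ∨ v = y i ∨ v ∈ P i)
    (hj : v = x j ∨ v = y j ∨ v ∈ P j) : i = j := by
  by_cases hv : v ∈ terminals x y
  · have hpair : ∀ {l}, (v = x l ∨ v = y l ∨ v ∈ P l) →
        ∃ a, Sum.elim x y a = v ∧ a.elim id id = l := by
      rintro l (rfl | rfl | hl)
      · exact ⟨.inl l, rfl, rfl⟩
      · exact ⟨.inr l, rfl, rfl⟩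
      · exact ((hPZ l).notMem_of_mem_left hl hv).elim
    obtain ⟨a, rfl, rfl⟩ := hpair hi
    obtain ⟨b, hb, rfl⟩ := hpair hj
    rw [hxy hb]
  · have hvP : ∀ {l}, (v = x l ∨ v = y l ∨ v ∈ P l) → v ∈ P l := by
      rintro l (rfl | rfl | hl)
      exacts [(hv (Or.inl ⟨l, rfl⟩)).elim, (hv (Or.inr ⟨l, rfl⟩)).elim, hl]
    by_contra hij
    exact (hP hij).notMem_of_mem_left (hvP hi) (hvP hj)

section
open scoped Classical

noncomputable def matchedVerts (M : Finset (Sym2 V)) : Finset V := M.biUnion Sym2.toFinset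

theorem mem_matchedVerts {M : Finset (Sym2 V)} {v : V} :
    v ∈ matchedVerts M ↔ ∃ e ∈ M, v ∈ e := by
  simp [matchedVerts, Sym2.mem_toFinset]

theorem card_matchedVerts_le (M : Finset (Sym2 V)) : #(matchedVerts M) ≤ 2 * #M :=
  calc #(matchedVerts M) ≤ ∑ e ∈ M, #e.toFinset := card_biUnion_le
    _ ≤ ∑ _e ∈ M, 2 := sum_le_sum fun e _ => by rw [Sym2.card_toFinset]; split_ifs <;> omega
    _ = 2 * #M := by rw [sum_const, smul_eq_mul, mul_comm]

def IsMaximalMatchingAvoiding (H : SimpleGraph V) (Z : Set V) (M : Finset (Sym2 V)) : Prop :=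
  IsMatchingAvoiding H Z M ∧
    ∀ u v, H.Adj u v → u ∉ Z → v ∉ Z → u ∈ matchedVerts M ∨ v ∈ matchedVerts M

theorem exists_isMaximalMatchingAvoiding [Finite V] (H : SimpleGraph V) (Z : Set V) :
    ∃ M, IsMaximalMatchingAvoiding H Z M := by
  have hempty : IsMatchingAvoiding H Z ∅ := ⟨by simp, by simp⟩
  obtain ⟨M, hM, hmax⟩ := exists_maximal_of_wellFoundedGT _ ⟨∅, hempty⟩
  refine ⟨M, hM, fun u v huv hu hv => by_contra fun hfree => ?_⟩
  simp only [not_or, mem_matchedVerts, not_exists, not_and] at hfree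
  have hfree' : ∀ e ∈ M, ∀ w ∈ s(u, v), w ∉ e := fun e he w hw hwe => by
    rcases Sym2.mem_iff.mp hw with rfl | rfl
    exacts [hfree.1 e he hwe, hfree.2 e he hwe]
  have hnew : s(u, v) ∉ M := fun h => hfree' _ h u (Sym2.mem_mk_left u v) (Sym2.mem_mk_left u v)
  have hins : IsMatchingAvoiding H Z (insert s(u, v) M) := by
    refine ⟨?_, ?_⟩
    · simp only [mem_insert, forall_eq_or_imp, Sym2.mem_iff, forall_eq]
      exact ⟨⟨huv, hu, hv⟩, hM.1⟩
    · rw [coe_insert]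
      exact hM.2.insert fun e he _ => ⟨hfree' e he, fun w hwe hw => hfree' e he w hw hwe⟩
  exact hnew (hmax hins (subset_insert _ _) (mem_insert_self _ _))

variable {ι : Type*} [Fintype V] {H : SimpleGraph V} {x y : ι → V}
  {M : Finset (Sym2 V)}

noncomputable def freeNeighbors (H : SimpleGraph V) (x y : ι → V) (M : Finset (Sym2 V))
    (i : ι) : Finset V :=
  {w | w ∉ terminals x y ∧ w ∉ matchedVerts M ∧ (H.Adj (x i) w ∨ H.Adj (y i) w)}

theorem mem_freeNeighbors {i : ι} {w : V} : w ∈ freeNeighbors H x y M i ↔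
    w ∉ terminals x y ∧ w ∉ matchedVerts M ∧ (H.Adj (x i) w ∨ H.Adj (y i) w) := by
  simp [freeNeighbors]

theorem isVertexCover_of_maximal [Fintype ι] (hind : IsIndepSet' H (terminals x y))
    (hM : IsMaximalMatchingAvoiding H (terminals x y) M) (S : Finset ι) :
    IsVertexCover H ↑(S.biUnion (freeNeighbors H x y M) ∪ matchedVerts M ∪
      Sᶜ.biUnion fun i => {x i, y i}) := by
  set C := S.biUnion (freeNeighbors H x y M) ∪ matchedVerts M ∪ Sᶜ.biUnion fun i => {x i, y i}
  have hNC : ∀ i ∈ S, ∀ w ∈ freeNeighbors H x y M i, w ∈ C := fun i hi w hw => by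
    simp only [C, mem_union, mem_biUnion]; exact Or.inl (Or.inl ⟨i, hi, hw⟩)
  have hMC : ∀ w ∈ matchedVerts M, w ∈ C := fun w hw => by simp [C, hw]
  have hSC : ∀ i ∉ S, x i ∈ C ∧ y i ∈ C := fun i hi => by
    simp only [C, mem_union, mem_biUnion]
    exact ⟨Or.inr ⟨i, by simpa, by simp⟩, Or.inr ⟨i, by simpa, by simp⟩⟩
  have hterm : ∀ a b, H.Adj a b → a ∈ terminals x y → a ∈ C ∨ b ∈ C := by
    intro a b hab ha
    have hb : b ∉ terminals x y := fun hb => hind a ha b hb hab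
    obtain ⟨i, hi⟩ : ∃ i, a = x i ∨ a = y i := by
      rcases ha with ⟨i, rfl⟩ | ⟨i, rfl⟩ <;> exact ⟨i, by simp⟩
    by_cases hiS : i ∈ S
    · by_cases hbM : b ∈ matchedVerts M
      · exact Or.inr (hMC b hbM)
      · refine Or.inr (hNC i hiS b (mem_freeNeighbors.mpr ⟨hb, hbM, ?_⟩))
        rcases hi with rfl | rfl <;> simp [hab]
    · rcases hi with rfl | rfl
      exacts [Or.inl (hSC i hiS).1, Or.inl (hSC i hiS).2]
  rintro e he
  induction e using Sym2.ind with
  | _ a b =>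
    suffices h : a ∈ C ∨ b ∈ C by rcases h with h | h <;> exact ⟨_, h, by simp⟩
    by_cases ha : a ∈ terminals x y
    · exact hterm a b he ha
    by_cases hb : b ∈ terminals x y
    · exact (hterm b a (H.adj_symm he) hb).symm
    exact (hM.2 a b he ha hb).imp (hMC a) (hMC b)

theorem card_le_card_biUnion_freeNeighbors_add [Fintype ι] (hind : IsIndepSet' H (terminals x y))
    (hM : IsMaximalMatchingAvoiding H (terminals x y) M)
    (hτ : 2 * Fintype.card ι - 1 ≤ vcNumber H) (S : Finset ι) :
    #S ≤ #(S.biUnion (freeNeighbors H x y M)) + #M := by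
  by_contra! hS
  -- the cover has at most `#N(S) + 2 #M + 2 (k - #S) ≤ 2k - 2` vertices, as `#N(S) + #M < #S`
  have hcover := vcNumber_le_ncard (isVertexCover_of_maximal hind hM S)
  rw [Set.ncard_coe_finset] at hcover
  have hB : #(Sᶜ.biUnion fun i => ({x i, y i} : Finset V)) ≤ 2 * #Sᶜ :=
    card_biUnion_le.trans (by simpa [mul_comm] using sum_le_sum fun i _ => card_le_two)
  have := card_union_le (S.biUnion (freeNeighbors H x y M) ∪ matchedVerts M)
    (Sᶜ.biUnion fun i => ({x i, y i} : Finset V))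
  have := card_union_le (S.biUnion (freeNeighbors H x y M)) (matchedVerts M)
  have := card_matchedVerts_le M
  have := card_compl S
  have := card_le_univ S
  omega

def offerVerts : V ⊕ Sym2 V → Set V := Sum.elim (fun w => {w}) fun e => {v | v ∈ e}

variable {i : ι} {z : V ⊕ Sym2 V}

theorem exists_edge_subset_offerVerts (hM : IsMatchingAvoiding H (terminals x y) M)
    (hz : z ∈ (freeNeighbors H x y M i).disjSum M) :
    ∃ e ∈ H.edgeSet, ∀ v ∈ e, v = x i ∨ v = y i ∨ v ∈ offerVerts z := by
  rcases mem_disjSum.mp hz with ⟨w, hw, rfl⟩ | ⟨e, he, rfl⟩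
  · rcases (mem_freeNeighbors.mp hw).2.2 with h | h
    · exact ⟨s(x i, w), h, by simp [offerVerts]⟩
    · exact ⟨s(y i, w), h, by simp [offerVerts]⟩
  · exact ⟨e, (hM.1 e he).1, fun v hv => Or.inr (Or.inr hv)⟩

theorem disjoint_offerVerts_terminals (hM : IsMatchingAvoiding H (terminals x y) M)
    (hz : z ∈ (freeNeighbors H x y M i).disjSum M) : Disjoint (offerVerts z) (terminals x y) := by
  rcases mem_disjSum.mp hz with ⟨w, hw, rfl⟩ | ⟨e, he, rfl⟩
  · exact Set.disjoint_singleton_left.mpr (mem_freeNeighbors.mp hw).1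
  · exact Set.disjoint_left.mpr (hM.1 e he).2

theorem disjoint_offerVerts (hM : IsMatchingAvoiding H (terminals x y) M) {j : ι}
    {z' : V ⊕ Sym2 V} (hz : z ∈ (freeNeighbors H x y M i).disjSum M)
    (hz' : z' ∈ (freeNeighbors H x y M j).disjSum M) (hne : z ≠ z') :
    Disjoint (offerVerts z) (offerVerts z') := by
  have hfree : ∀ {l w e}, w ∈ freeNeighbors H x y M l → e ∈ M → w ∉ e :=
    fun hw he hwe => (mem_freeNeighbors.mp hw).2.1 (mem_matchedVerts.mpr ⟨_, he, hwe⟩)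
  rcases mem_disjSum.mp hz with ⟨w, hw, rfl⟩ | ⟨e, he, rfl⟩ <;>
    rcases mem_disjSum.mp hz' with ⟨w', hw', rfl⟩ | ⟨e', he', rfl⟩
  · exact Set.disjoint_singleton.mpr fun h => hne (h ▸ rfl)
  · exact Set.disjoint_singleton_left.mpr (hfree hw he')
  · exact Set.disjoint_singleton_right.mpr (hfree hw' he)
  · exact Set.disjoint_left.mpr (hM.2 he he' fun h => hne (h ▸ rfl))

end

theorem stmt11_general {V : Type u} [Fintype V] (k : ℕ) (H : SimpleGraph V)
    (htau : 2 * k - 1 ≤ vcNumber H)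
    (x y : Fin k → V) (hxy : Function.Injective (Sum.elim x y))
    (hindep : IsIndepSet' H (Set.range x ∪ Set.range y)) :
    ∃ m : Fin k → Sym2 V,
      (∀ i, m i ∈ H.edgeSet) ∧
      (∀ i j, i ≠ j → ∀ v ∈ m i, v ∉ m j) ∧
      (∀ i j, i ≠ j → x j ∉ m i ∧ y j ∉ m i) := by
  classical
  obtain ⟨M, hM⟩ := exists_isMaximalMatchingAvoiding H (terminals x y)
  obtain ⟨f, hf, hfM⟩ := Finset.exists_injective_mem_disjSum_of_forall_card_le _ M
    (card_le_card_biUnion_freeNeighbors_add hindep hM (by simpa using htau))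
  choose m hm hmP using fun i => exists_edge_subset_offerVerts hM.1 (hfM i)
  have howner := eq_of_mem_private_parts hxy (fun i => disjoint_offerVerts_terminals hM.1 (hfM i))
    fun i j hij => disjoint_offerVerts hM.1 (hfM i) (hfM j) (hf.ne hij)
  refine ⟨m, hm, fun i j hij v hvi hvj => hij (howner (hmP i v hvi) (hmP j v hvj)),
    fun i j hij => ⟨fun h => hij (howner (hmP i _ h) (.inl rfl)),
      fun h => hij (howner (hmP i _ h) (.inr (.inl rfl)))⟩⟩

theorem stmt11 {V : Type u} [Fintype V] (k : ℕ) (hk : 0 < k) (H : SimpleGraph V)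
    (htau : 2 * k - 1 ≤ vcNumber H)
    (x y : Fin k → V) (hxy : Function.Injective (Sum.elim x y))
    (hindep : IsIndepSet' H (Set.range x ∪ Set.range y)) :
    ∃ m : Fin k → Sym2 V,
      (∀ i, m i ∈ H.edgeSet) ∧
      (∀ i j, i ≠ j → ∀ v ∈ m i, v ∉ m j) ∧
      (∀ i j, i ≠ j → x j ∉ m i ∧ y j ∉ m i) :=
  stmt11_general k H htau x y hxy hindep
end

section
/- Let G be a graph and let (A,B) be a nice partition of G induced by a minimum odd cycle cover X of G. Then |X| = τ(G_{A,B}), the vertex cover number of G_{A,B}. -/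
universe u

variable {V : Type u}

/-
Since `(A \ X, B \ X)` bipartitions `G - X`, every edge of `G_{A,B}` meets `X`, so `τ(G_{A,B}) ≤ |X|`.
Conversely, for any vertex cover `C` of `G_{A,B}`, every edge of `G - C` joins `A` to `B`, so colouring
by membership in `A` shows that `C` is an odd cycle cover; minimality of `X` gives `|X| ≤ |C|`.
-/

section

variable {G : SimpleGraph V} {A B C : Set V}

theorem isVertexCover_sideGraph_iff :
    IsVertexCover (sideGraph G A B) C ↔
      ∀ u v, G.Adj u v → u ∉ C → v ∉ C → ¬(u ∈ A ∧ v ∈ A) ∧ ¬(u ∈ B ∧ v ∈ B) := by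
  constructor
  · intro hC u v huv hu hv
    have hcover : (u ∈ A ∧ v ∈ A) ∨ (u ∈ B ∧ v ∈ B) → False := fun hside => by
      obtain ⟨w, hwC, hw⟩ := hC s(u, v) ⟨huv, hside⟩
      rcases Sym2.mem_iff.mp hw with rfl | rfl
      · exact hu hwC
      · exact hv hwC
    exact ⟨fun h => hcover (Or.inl h), fun h => hcover (Or.inr h)⟩
  · intro h e he
    induction e using Sym2.ind with
    | _ u v =>
      by_contra! hnot
      have hu : u ∉ C := fun hu => hnot u hu (Sym2.mem_mk_left u v)
      have hv : v ∉ C := fun hv => hnot v hv (Sym2.mem_mk_right u v)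
      obtain ⟨hA, hB⟩ := h u v he.1 hu hv
      exact he.2.elim hA hB

theorem isOddCycleCover_of_isVertexCover_sideGraph (hAB : A ∪ B = Set.univ)
    (hC : IsVertexCover (sideGraph G A B) C) : IsOddCycleCover G C := by
  classical
  have hcross := isVertexCover_sideGraph_iff.1 hC
  have hcol : (G.induce Cᶜ).Coloring Bool :=
    SimpleGraph.Coloring.mk (fun v => decide (v.1 ∈ A)) <| by
      intro u v huv
      obtain ⟨hA, hB⟩ := hcross u v huv u.2 v.2
      have hu : u.1 ∈ A ∪ B := hAB ▸ Set.mem_univ _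
      have hv : v.1 ∈ A ∪ B := hAB ▸ Set.mem_univ _
      by_cases huA : u.1 ∈ A <;> by_cases hvA : v.1 ∈ A
      · exact absurd ⟨huA, hvA⟩ hA
      · simp [huA, hvA]
      · simp [huA, hvA]
      · exact absurd ⟨Or.resolve_left hu huA, Or.resolve_left hv hvA⟩ hB
  simpa [IsOddCycleCover, Bipartite] using hcol.colorable

theorem vcNumber_eq_of_isVertexCover_of_forall_le (hC : IsVertexCover G C)
    (hmin : ∀ D, IsVertexCover G D → C.ncard ≤ D.ncard) : vcNumber G = C.ncard :=
  le_antisymm (Nat.sInf_le ⟨C, hC, rfl⟩) <|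
    le_csInf ⟨C.ncard, C, hC, rfl⟩ fun _ ⟨D, hD, hDcard⟩ => hDcard ▸ hmin D hD

end

theorem stmt12_general {V : Type u} (G : SimpleGraph V) (X A B : Set V)
    (hAB : A ∪ B = Set.univ)
    (hmin : IsMinOddCycleCover G X) (hind : InducesPartition G X A B) :
    X.ncard = vcNumber (sideGraph G A B) := by
  have hX : IsVertexCover (sideGraph G A B) X := isVertexCover_sideGraph_iff.2 hind.1
  refine (vcNumber_eq_of_isVertexCover_of_forall_le hX fun C hC => ?_).symm
  exact hmin.2 C (isOddCycleCover_of_isVertexCover_sideGraph hAB hC)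

theorem stmt12 {V : Type u} [Fintype V] (G : SimpleGraph V) (X A B : Set V)
    (hAB : A ∪ B = Set.univ) (hdisj : Disjoint A B)
    (hmin : IsMinOddCycleCover G X) (hind : InducesPartition G X A B) :
    X.ncard = vcNumber (sideGraph G A B) :=
  stmt12_general G X A B hAB hmin hind
end
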